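/- With the operators of the type-B₂ positive representation for w₀ = s₁s₂s₁s₂ defined in the context, the quantum Serre relations hold for the e-generators, as identities of operators on the space of all functions ℂ⁴ → ℂ: e₁³e₂ − [3]_{q_s} e₁²e₂e₁ + [3]_{q_s} e₁e₂e₁² − e₂e₁³ = 0 and e₂²e₁ − [2]_q e₂e₁e₂ + e₁e₂² = 0, where [2]_q = q + q⁻¹ and [3]_{q_s} = q_s² + 1 + q_s⁻². -/
import Mathlib


noncomputable section

open Complex

/-- The space of operators on all functions `ℂ⁴ → ℂ`. -/
abbrev OpB : Type := Module.End ℂ ((Fin 4 → ℂ) → ℂ)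

/-- Weyl operator `W(ℓ,δ)`: `(W(ℓ,δ) f)(x) = exp(ℓ(x + δ/2)) · f(x + δ)`. -/
def Wop (ℓ : (Fin 4 → ℂ) → ℂ) (δ : Fin 4 → ℂ) : OpB where
  toFun f := fun x => Complex.exp (ℓ (x + (2 : ℂ)⁻¹ • δ)) * f (x + δ)
  map_add' f g := by funext x; simp [mul_add]
  map_smul' c f := by funext x; simp [smul_eq_mul]; ring

/-- `b_s = b/√2`. -/
def bs (b : ℝ) : ℝ := b / Real.sqrt 2

/-- `q = exp(π i b²)`. -/
def qq (b : ℝ) : ℂ := Complex.exp ((Real.pi : ℂ) * Complex.I * (b : ℂ) ^ 2)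

/-- `q_s = exp(π i b_s²)`. -/
def qs (b : ℝ) : ℂ := Complex.exp ((Real.pi : ℂ) * Complex.I * ((bs b : ℝ) : ℂ) ^ 2)

/-- The affine functional `ℓ_α = π (b_s (ct·t + cv·v + cl1·λ₁) + b (cu·u + cw·w + cl2·λ₂))`,
where `(t,u,v,w) = (x 0, x 1, x 2, x 3)`. -/
def ellB (b lam1 lam2 ct cu cv cw cl1 cl2 : ℝ) : (Fin 4 → ℂ) → ℂ := fun x =>
  (Real.pi : ℂ) * (((bs b : ℝ) : ℂ) * (ct * x 0 + cv * x 2 + cl1 * lam1)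
    + (b : ℂ) * (cu * x 1 + cw * x 3 + cl2 * lam2))

/-- The shift vector `δ = (−i b_s d_t, −i b d_u, −i b_s d_v, −i b d_w)`. -/
def deltaB (b dt du dv dw : ℝ) : Fin 4 → ℂ :=
  ![-Complex.I * ((bs b : ℝ) : ℂ) * dt, -Complex.I * (b : ℂ) * du,
    -Complex.I * ((bs b : ℝ) : ℂ) * dv, -Complex.I * (b : ℂ) * dw]

/-- The operator `[α]e(d_t p_t + d_u p_u + d_v p_v + d_w p_w) = W(ℓ_α,δ) + W(−ℓ_α,δ)`. -/
def brB (b lam1 lam2 ct cu cv cw cl1 cl2 dt du dv dw : ℝ) : OpB :=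
  Wop (ellB b lam1 lam2 ct cu cv cw cl1 cl2) (deltaB b dt du dv dw)
    + Wop (fun x => -(ellB b lam1 lam2 ct cu cv cw cl1 cl2 x)) (deltaB b dt du dv dw)

/-- `K₁ = W(π(b_s(2λ₁−2t−2v) + b(u+w)), 0)`. -/
def K1 (b lam1 lam2 : ℝ) : OpB := Wop (ellB b lam1 lam2 (-2) 1 (-2) 1 2 0) 0

/-- `K₁⁻¹`, the multiplication operator with negated exponent. -/
def K1inv (b lam1 lam2 : ℝ) : OpB := Wop (ellB b lam1 lam2 2 (-1) 2 (-1) (-2) 0) 0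

/-- `K₂ = W(π(b(2λ₂−2u−2w) + b_s(2t+2v)), 0)`. -/
def K2 (b lam1 lam2 : ℝ) : OpB := Wop (ellB b lam1 lam2 2 (-2) 2 (-2) 0 2) 0

/-- `K₂⁻¹`, the multiplication operator with negated exponent. -/
def K2inv (b lam1 lam2 : ℝ) : OpB := Wop (ellB b lam1 lam2 (-2) 2 (-2) 2 0 (-2)) 0

/-- `e₁ = [t]e(−p_t−p_u+p_w) + [u−v]e(−p_u−p_v+p_w) + [v−w]e(−p_v)`. -/
def e1 (b lam1 lam2 : ℝ) : OpB :=
  brB b lam1 lam2 1 0 0 0 0 0 (-1) (-1) 0 1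
    + brB b lam1 lam2 0 1 (-1) 0 0 0 0 (-1) (-1) 1
    + brB b lam1 lam2 0 0 1 (-1) 0 0 0 0 (-1) 0

/-- `e₂ = [w]e(−p_w)`. -/
def e2 (b lam1 lam2 : ℝ) : OpB := brB b lam1 lam2 0 0 0 1 0 0 0 0 0 (-1)

/-- `f₁ = [2λ₁−t]e(p_t) + [2λ₁−2t+u−v]e(p_v)`. -/
def f1 (b lam1 lam2 : ℝ) : OpB :=
  brB b lam1 lam2 (-1) 0 0 0 2 0 1 0 0 0
    + brB b lam1 lam2 (-2) 1 (-1) 0 2 0 0 0 1 0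

/-- `f₂ = [2λ₂+2t−u]e(p_u) + [2λ₂+2t−2u+2v−w]e(p_w)`. -/
def f2 (b lam1 lam2 : ℝ) : OpB :=
  brB b lam1 lam2 2 (-1) 0 0 0 2 0 1 0 0
    + brB b lam1 lam2 2 (-2) 2 (-1) 0 2 0 0 0 1


/-- `ζ = exp(π i b²/4)`, the basic phase; all structure constants are powers of it. -/
def zetaB2 (b : ℝ) : ℂ := Complex.exp ((Real.pi : ℂ) * I * (b:ℂ)^2 / 4)

/-- Basic Weyl term with integer coefficient data and no `λ` constants. -/
def WWB2 (b lam1 lam2 : ℝ) (ct cu cv cw dt du dv dw : ℤ) : OpB :=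
  Wop (ellB b lam1 lam2 ct cu cv cw 0 0) (deltaB b dt du dv dw)

lemma zetaB2_zpow (b : ℝ) (m : ℤ) :
    zetaB2 b ^ m = Complex.exp ((Real.pi : ℂ) * I * (b:ℂ)^2 * m / 4) := by
  rw [zetaB2, ← Complex.exp_int_mul]; congr 1; ring

lemma bs_sq_complex (b : ℝ) : ((bs b : ℝ) : ℂ)^2 = (b:ℂ)^2 / 2 := by
  have h2 : ((Real.sqrt 2 : ℝ) : ℂ)^2 = 2 := by
    norm_cast; rw [Real.sq_sqrt]; norm_num
  rw [bs]; push_cast; rw [div_pow, h2]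

lemma deltaB_add_int (b : ℝ) (dt du dv dw dt' du' dv' dw' : ℤ) :
    deltaB b dt du dv dw + deltaB b dt' du' dv' dw'
      = deltaB b ((dt+dt' : ℤ) : ℝ) ((du+du' : ℤ) : ℝ) ((dv+dv' : ℤ) : ℝ) ((dw+dw' : ℤ) : ℝ) := by
  funext i
  fin_cases i <;> simp [deltaB] <;> push_cast <;> ring

lemma WWB2_mul (b lam1 lam2 : ℝ)
    (ct cu cv cw dt du dv dw ct' cu' cv' cw' dt' du' dv' dw' : ℤ) :
    WWB2 b lam1 lam2 ct cu cv cw dt du dv dw * WWB2 b lam1 lam2 ct' cu' cv' cw' dt' du' dv' dw'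
    = zetaB2 b ^ ((ct*dt'+cv*dv'+2*cu*du'+2*cw*dw') - (ct'*dt+cv'*dv+2*cu'*du+2*cw'*dw))
      • WWB2 b lam1 lam2 (ct+ct') (cu+cu') (cv+cv') (cw+cw')
          (dt+dt') (du+du') (dv+dv') (dw+dw') := by
  apply LinearMap.ext; intro f; funext x
  rw [zetaB2_zpow]
  simp only [Module.End.mul_apply, WWB2, Wop, LinearMap.coe_mk, AddHom.coe_mk,
    LinearMap.smul_apply, Pi.smul_apply, smul_eq_mul]
  rw [← mul_assoc, ← Complex.exp_add, ← mul_assoc, ← Complex.exp_add]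
  have harg : x + deltaB b dt du dv dw + deltaB b dt' du' dv' dw'
      = x + deltaB b ((dt+dt' : ℤ) : ℝ) ((du+du' : ℤ) : ℝ) ((dv+dv' : ℤ) : ℝ)
          ((dw+dw' : ℤ) : ℝ) := by
    rw [add_assoc, deltaB_add_int]
  rw [harg]
  congr 1
  · congr 1
    simp only [ellB, deltaB, Pi.add_apply, Pi.smul_apply, Matrix.cons_val_zero,
      Matrix.cons_val_one, Matrix.head_cons, Matrix.cons_val_two, Matrix.tail_cons,
      Matrix.cons_val_three, smul_eq_mul]
    have hb := bs_sq_complex b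
    push_cast
    linear_combination ((Real.pi:ℂ) * I / 2 * ((ct*dt'+cv*dv') - (ct'*dt+cv'*dv))) * hb

lemma brB_eq_WWB2 (b lam1 lam2 : ℝ) (ct cu cv cw dt du dv dw : ℤ) :
    brB b lam1 lam2 ct cu cv cw 0 0 dt du dv dw
      = WWB2 b lam1 lam2 ct cu cv cw dt du dv dw
        + WWB2 b lam1 lam2 (-ct) (-cu) (-cv) (-cw) dt du dv dw := by
  unfold brB WWB2
  congr 1
  congr 1
  funext x
  simp only [ellB]
  push_cast
  ring

lemma e1_eq_WWB2 (b lam1 lam2 : ℝ) :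
    e1 b lam1 lam2
      = WWB2 b lam1 lam2 1 0 0 0 (-1) (-1) 0 1 + WWB2 b lam1 lam2 (-1) 0 0 0 (-1) (-1) 0 1
        + (WWB2 b lam1 lam2 0 1 (-1) 0 0 (-1) (-1) 1
            + WWB2 b lam1 lam2 0 (-1) 1 0 0 (-1) (-1) 1)
        + (WWB2 b lam1 lam2 0 0 1 (-1) 0 0 (-1) 0
            + WWB2 b lam1 lam2 0 0 (-1) 1 0 0 (-1) 0) := by
  rw [e1]
  have h1 := brB_eq_WWB2 b lam1 lam2 1 0 0 0 (-1) (-1) 0 1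
  have h2 := brB_eq_WWB2 b lam1 lam2 0 1 (-1) 0 0 (-1) (-1) 1
  have h3 := brB_eq_WWB2 b lam1 lam2 0 0 1 (-1) 0 0 (-1) 0
  push_cast at h1 h2 h3
  rw [h1, h2, h3]
  norm_num

lemma e2_eq_WWB2 (b lam1 lam2 : ℝ) :
    e2 b lam1 lam2
      = WWB2 b lam1 lam2 0 0 0 1 0 0 0 (-1) + WWB2 b lam1 lam2 0 0 0 (-1) 0 0 0 (-1) := by
  rw [e2]
  have h1 := brB_eq_WWB2 b lam1 lam2 0 0 0 1 0 0 0 (-1)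
  push_cast at h1
  rw [h1]
  norm_num

lemma qs_sq_zeta (b : ℝ) : (qs b)^2 = zetaB2 b ^ (4:ℤ) := by
  rw [qs, bs_sq_complex, zetaB2_zpow, ← Complex.exp_nat_mul]
  norm_num; congr 1; ring

lemma qs_inv_sq_zeta (b : ℝ) : ((qs b)⁻¹)^2 = zetaB2 b ^ (-4:ℤ) := by
  rw [qs, bs_sq_complex, ← Complex.exp_neg, zetaB2_zpow, ← Complex.exp_nat_mul]
  norm_num; congr 1; ring

lemma qq_zeta (b : ℝ) : qq b = zetaB2 b ^ (4:ℤ) := by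
  rw [qq, zetaB2_zpow]; congr 1; norm_num

lemma qq_inv_zeta (b : ℝ) : (qq b)⁻¹ = zetaB2 b ^ (-4:ℤ) := by
  rw [qq, ← Complex.exp_neg, zetaB2_zpow]; congr 1; push_cast; ring

set_option maxHeartbeats 8000000 in
lemma B2_serre1 (b lam1 lam2 : ℝ) :
    e1 b lam1 lam2 ^ 3 * e2 b lam1 lam2
      - ((qs b) ^ 2 + 1 + ((qs b)⁻¹) ^ 2)
          • (e1 b lam1 lam2 ^ 2 * e2 b lam1 lam2 * e1 b lam1 lam2)
      + ((qs b) ^ 2 + 1 + ((qs b)⁻¹) ^ 2)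
          • (e1 b lam1 lam2 * e2 b lam1 lam2 * e1 b lam1 lam2 ^ 2)
      - e2 b lam1 lam2 * e1 b lam1 lam2 ^ 3 = 0 := by
  have hz : zetaB2 b ≠ 0 := Complex.exp_ne_zero _
  rw [e1_eq_WWB2, e2_eq_WWB2, qs_inv_sq_zeta, qs_sq_zeta]
  simp only [pow_succ, pow_zero, one_mul]
  simp only [mul_add, add_mul, WWB2_mul, smul_mul_assoc, mul_smul_comm, smul_smul, smul_add,
    Int.reduceMul, Int.reduceAdd, Int.reduceSub, Int.reduceNeg]
  simp only [← zpow_add₀ hz, Int.reduceAdd, Int.reduceNeg]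
  match_scalars <;> (field_simp; try ring)

set_option maxHeartbeats 2000000 in
lemma B2_serre2 (b lam1 lam2 : ℝ) :
    e2 b lam1 lam2 ^ 2 * e1 b lam1 lam2
      - (qq b + (qq b)⁻¹) • (e2 b lam1 lam2 * e1 b lam1 lam2 * e2 b lam1 lam2)
      + e1 b lam1 lam2 * e2 b lam1 lam2 ^ 2 = 0 := by
  have hz : zetaB2 b ≠ 0 := Complex.exp_ne_zero _
  rw [e1_eq_WWB2, e2_eq_WWB2, qq_inv_zeta, qq_zeta]
  simp only [pow_two]
  simp only [mul_add, add_mul, WWB2_mul, smul_mul_assoc, mul_smul_comm, smul_smul, smul_add,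
    Int.reduceMul, Int.reduceAdd, Int.reduceSub, Int.reduceNeg]
  simp only [← zpow_add₀ hz, Int.reduceAdd, Int.reduceNeg]
  match_scalars <;> (field_simp; try ring)


/-- the quantum Serre relations for the `e`-generators of the type-B₂
positive representation corresponding to `w₀ = s₁s₂s₁s₂`. -/
theorem B2_Serre_e (b lam1 lam2 : ℝ) (hb0 : 0 < b) (hb1 : b < 1)
    (hirr : Irrational (b ^ 2)) :
    e1 b lam1 lam2 ^ 3 * e2 b lam1 lam2
      - ((qs b) ^ 2 + 1 + ((qs b)⁻¹) ^ 2) • (e1 b lam1 lam2 ^ 2 * e2 b lam1 lam2 * e1 b lam1 lam2)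
      + ((qs b) ^ 2 + 1 + ((qs b)⁻¹) ^ 2) • (e1 b lam1 lam2 * e2 b lam1 lam2 * e1 b lam1 lam2 ^ 2)
      - e2 b lam1 lam2 * e1 b lam1 lam2 ^ 3 = 0 ∧
    e2 b lam1 lam2 ^ 2 * e1 b lam1 lam2
      - (qq b + (qq b)⁻¹) • (e2 b lam1 lam2 * e1 b lam1 lam2 * e2 b lam1 lam2)
      + e1 b lam1 lam2 * e2 b lam1 lam2 ^ 2 = 0 := by
  exact ⟨B2_serre1 b lam1 lam2, B2_serre2 b lam1 lam2⟩

end
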